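/- arXiv:2306.00615 — 5 statements merged into one kernel-verified Lean document; each statement's English description precedes it below -/
import Mathlib

section
/- For every finite graph G=(V,E) with at least one edge, log₂ log₂ χ(G) ≤ NCC(GraphIneq_G) ≤ log₂ log₂ χ(G) + 1. -/
/-! ### Basic objects: Boolean functions, matrices, compositions -/

/-- Boolean functions on `n`-bit strings. -/
abbrev BFunc (n : ℕ) : Type := (Fin n → Bool) → Bool

/-- Boolean `m × n` matrices, viewed as tuples of rows. -/
abbrev BMat (m n : ℕ) : Type := Fin m → Fin n → Bool

/-- The column vector obtained by applying `g` to every row of `X`. -/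
def gRows {m n : ℕ} (g : BFunc n) (X : BMat m n) : Fin m → Bool := fun i => g (X i)

/-- The composition `f ⋄ g` applied to a matrix `X`. -/
def compFG {m n : ℕ} (f : BFunc m) (g : BFunc n) (X : BMat m n) : Bool := f (gRows g X)

/-- A Boolean function is non-constant. -/
def NonConst {k : ℕ} (f : BFunc k) : Prop := (∃ x, f x = true) ∧ (∃ x, f x = false)

/-- A Boolean function on `n` bits is balanced if it has exactly `2^(n-1)` ones. -/
def IsBalanced {n : ℕ} (g : BFunc n) : Prop := {x | g x = true}.ncard = 2 ^ (n - 1)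

/-- The set `V₀` of balanced functions. -/
def BalancedFuncs (n : ℕ) : Set (BFunc n) := {g | IsBalanced g}

/-- The set of matrices `X` with `g(X) = a`. -/
def ginv {m n : ℕ} (g : BFunc n) (a : Fin m → Bool) : Set (BMat m n) := {X | gRows g X = a}

/-! ### De Morgan formulas and formula complexity -/

/-- De Morgan formulas over `m` variables: leaves are literals, gates are AND/OR. -/
inductive DMF (m : ℕ) : Type where
  | lit (i : Fin m) (pos : Bool)
  | and (l r : DMF m)
  | or (l r : DMF m)

namespace DMF

/-- Size of a formula: its number of leaves. -/
def size {m : ℕ} : DMF m → ℕ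
  | lit _ _ => 1
  | and l r => l.size + r.size
  | or l r => l.size + r.size

/-- Evaluation of a formula. -/
def eval {m : ℕ} : DMF m → (Fin m → Bool) → Bool
  | lit i pos, x => if pos then x i else !(x i)
  | and l r, x => l.eval x && r.eval x
  | or l r, x => l.eval x || r.eval x

end DMF

/-- `L(f)`: the minimal size of a de Morgan formula computing `f`. -/
noncomputable def Lfun {m : ℕ} (f : BFunc m) : ℕ :=
  sInf {s | ∃ φ : DMF m, φ.size = s ∧ ∀ x, φ.eval x = f x}

/-- `L(A × B)`: the minimal size of a de Morgan formula separating `A` from `B`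
(`0` if `A` or `B` is empty). -/
noncomputable def Lrect {m : ℕ} (A B : Set (Fin m → Bool)) : ℕ :=
  open Classical in
  if A.Nonempty ∧ B.Nonempty then
    sInf {s | ∃ φ : DMF m, φ.size = s ∧
      (∀ a ∈ A, φ.eval a = true) ∧ (∀ b ∈ B, φ.eval b = false)}
  else 0

/-! ### Deterministic communication protocols -/

/-- A deterministic communication protocol tree: at each internal vertex the
indicated player sends a bit determined by her input. -/
inductive Prot (X Y O : Type) : Type where
  | leaf (o : O)
  | alice (s : X → Bool) (c : Bool → Prot X Y O)
  | bob (s : Y → Bool) (c : Bool → Prot X Y O)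

namespace Prot

variable {X Y O : Type}

/-- Depth of a protocol tree. -/
def depth : Prot X Y O → ℕ
  | leaf _ => 0
  | alice _ c => 1 + max (c false).depth (c true).depth
  | bob _ c => 1 + max (c false).depth (c true).depth

/-- Running a protocol on a pair of inputs. -/
def run : Prot X Y O → X → Y → O
  | leaf o, _, _ => o
  | alice s c, x, y => (c (s x)).run x y
  | bob s c, x, y => (c (s y)).run x y

/-- A protocol solves a relation if on every input pair it outputs a valid solution. -/
def Solves (p : Prot X Y O) (R : X → Y → O → Prop) : Prop :=
  ∀ x y, R x y (p.run x y)

/-- Alice's input `x` is consistent with the transcript `tr`. -/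
def ConsA : Prot X Y O → List Bool → X → Prop
  | _, [], _ => True
  | leaf _, _ :: _, _ => False
  | alice s c, b :: tr, x => s x = b ∧ ConsA (c b) tr x
  | bob _ c, b :: tr, x => ConsA (c b) tr x

/-- Bob's input `y` is consistent with the transcript `tr`. -/
def ConsB : Prot X Y O → List Bool → Y → Prop
  | _, [], _ => True
  | leaf _, _ :: _, _ => False
  | alice _ c, b :: tr, y => ConsB (c b) tr y
  | bob s c, b :: tr, y => s y = b ∧ ConsB (c b) tr y

/-- `tr` is a (possibly partial) transcript of `p`: each player has a consistent input. -/
def IsTranscript (p : Prot X Y O) (tr : List Bool) : Prop :=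
  (∃ x, ConsA p tr x) ∧ (∃ y, ConsB p tr y)

end Prot

/-- `C(R)`: the deterministic communication complexity of a relation. -/
noncomputable def CC {X Y O : Type} (R : X → Y → O → Prop) : ℕ :=
  sInf {d | ∃ p : Prot X Y O, p.Solves R ∧ p.depth = d}

/-! ### Karchmer–Wigderson compositions and multiplexor compositions -/

/-- The relation `KW_f ⋄ KW_g`. -/
def KWdiam {m n : ℕ} (f : BFunc m) (g : BFunc n) :
    {X : BMat m n // compFG f g X = true} → {Y : BMat m n // compFG f g Y = false} →
      Fin m × Fin n → Prop :=
  fun X Y o => X.1 o.1 o.2 ≠ Y.1 o.1 o.2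

/-- The strong composition `KW_f ⊛ KW_g`. -/
def KWstrong {m n : ℕ} (f : BFunc m) (g : BFunc n) :
    {X : BMat m n // compFG f g X = true} → {Y : BMat m n // compFG f g Y = false} →
      Fin m × Fin n → Prop :=
  fun X Y o => X.1 o.1 o.2 ≠ Y.1 o.1 o.2 ∧ g (X.1 o.1) ≠ g (Y.1 o.1)

/-- Alice's inputs in the multiplexor compositions: a function `g` and a matrix `X`
with `(f ⋄ g)(X) = 1`. -/
def AliceMux (m n : ℕ) (f : BFunc m) : Type :=
  {p : BFunc n × BMat m n // compFG f p.1 p.2 = true}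

/-- Bob's inputs in the multiplexor compositions. -/
def BobMux (m n : ℕ) (f : BFunc m) : Type :=
  {p : BFunc n × BMat m n // compFG f p.1 p.2 = false}

/-- The relation `KW_f ⋄ MUX_n` (output `none` plays the role of `⊥`). -/
def MuxDiam {m n : ℕ} (f : BFunc m) :
    AliceMux m n f → BobMux m n f → Option (Fin m × Fin n) → Prop :=
  fun x y o =>
    match o with
    | none => x.1.1 ≠ y.1.1
    | some (i, j) => x.1.2 i j ≠ y.1.2 i j

/-- The strong multiplexor composition `KW_f ⊛ MUX_n`. -/
def MuxStrong {m n : ℕ} (f : BFunc m) :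
    AliceMux m n f → BobMux m n f → Option (Fin m × Fin n) → Prop :=
  fun x y o =>
    match o with
    | none => x.1.1 ≠ y.1.1
    | some (i, j) => x.1.2 i j ≠ y.1.2 i j ∧ x.1.1 (x.1.2 i) ≠ y.1.1 (y.1.2 i)

/-- The function part of Alice's multiplexor input. -/
def muxGA {m n : ℕ} {f : BFunc m} (x : AliceMux m n f) : BFunc n := x.1.1

/-- The function part of Bob's multiplexor input. -/
def muxGB {m n : ℕ} {f : BFunc m} (y : BobMux m n f) : BFunc n := y.1.1

/-! ### Half-duplex protocols with adversary -/

/-- One player's tree in a half-duplex protocol: at each internal vertex, the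
player's input determines whether she sends a bit (`some b`) or receives (`none`);
the four children are indexed by (isSend, bit). -/
inductive HDTree (X O : Type) : Type where
  | leaf (o : O)
  | node (act : X → Option Bool) (child : Bool → Bool → HDTree X O)

namespace HDTree

variable {X O : Type}

/-- The tree is full of depth `d`: every leaf is at distance exactly `d` from the root. -/
inductive IsFull : HDTree X O → ℕ → Prop where
  | leaf (o : O) : IsFull (leaf o) 0
  | node {act : X → Option Bool} {child : Bool → Bool → HDTree X O} {d : ℕ}
      (h : ∀ s b, IsFull (child s b) d) : IsFull (node act child) (d + 1)

/-- The input `x` is consistent with the transcript `tr`: there is a vertex at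
depth `|tr|` reachable on `x` along edges labeled `send(trᵢ)` or `receive(trᵢ)`. -/
def Cons : HDTree X O → List Bool → X → Prop
  | _, [], _ => True
  | leaf _, _ :: _, _ => False
  | node act child, b :: tr, x =>
      match act x with
      | some c => c = b ∧ Cons (child true b) tr x
      | none => Cons (child false b) tr x

end HDTree

/-- One round of a half-duplex execution; `ab` are the bits delivered by the
adversary in case the round is silent. -/
def hdStep {X Y O : Type} (tA : HDTree X O) (tB : HDTree Y O) (x : X) (y : Y)
    (ab : Bool × Bool) : HDTree X O × HDTree Y O :=
  match tA, tB with
  | HDTree.node actA chA, HDTree.node actB chB =>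
      ⟨match actA x with
        | some b => chA true b
        | none => chA false ((actB y).getD ab.1),
       match actB y with
        | some b => chB true b
        | none => chB false ((actA x).getD ab.2)⟩
  | tA, tB => (tA, tB)

/-- Running a half-duplex execution for `d` rounds against the adversary `adv`. -/
def hdRun {X Y O : Type} :
    ℕ → (ℕ → Bool × Bool) → HDTree X O → HDTree Y O → X → Y → HDTree X O × HDTree Y O
  | 0, _, tA, tB, _, _ => (tA, tB)
  | d + 1, adv, tA, tB, x, y =>
      hdRun d (fun i => adv (i + 1)) (hdStep tA tB x y (adv 0)).1 (hdStep tA tB x y (adv 0)).2 x y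

/-- The current round is classical: exactly one of the players sends. -/
def ClassicalRound {X Y O : Type} (tA : HDTree X O) (tB : HDTree Y O) (x : X) (y : Y) : Prop :=
  match tA, tB with
  | HDTree.node actA _, HDTree.node actB _ => (actA x).isSome ≠ (actB y).isSome
  | _, _ => True

/-- All rounds of the `d`-round execution on `(x, y)` against `adv` are classical. -/
def AllClassical {X Y O : Type} :
    ℕ → (ℕ → Bool × Bool) → HDTree X O → HDTree Y O → X → Y → Prop
  | 0, _, _, _, _, _ => True
  | d + 1, adv, tA, tB, x, y =>
      ClassicalRound tA tB x y ∧
        AllClassical d (fun i => adv (i + 1)) (hdStep tA tB x y (adv 0)).1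
          (hdStep tA tB x y (adv 0)).2 x y

/-- A half-duplex protocol of depth `d`: a pair of full 4-ary trees of depth `d`. -/
structure HDProt (X Y O : Type) (d : ℕ) where
  alice : HDTree X O
  bob : HDTree Y O
  fullA : alice.IsFull d
  fullB : bob.IsFull d

namespace HDProt

variable {X Y O : Type} {d : ℕ}

/-- The protocol solves the relation `R`: in every execution against every adversary,
both players reach leaves labeled with a common output that is valid for the inputs. -/
def Solves (P : HDProt X Y O d) (R : X → Y → O → Prop) : Prop :=
  ∀ x y adv, ∃ o : O,
    (hdRun d adv P.alice P.bob x y).1 = HDTree.leaf o ∧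
    (hdRun d adv P.alice P.bob x y).2 = HDTree.leaf o ∧ R x y o

/-- The protocol is partially half-duplex with respect to the function parts
`gA`, `gB` of the inputs: when `gA x = gB y`, all rounds are classical. -/
def PartiallyHD {G : Type} (P : HDProt X Y O d) (gA : X → G) (gB : Y → G) : Prop :=
  ∀ x y adv, gA x = gB y → AllClassical d adv P.alice P.bob x y

/-- `tr` is a (possibly partial) transcript of `P`. -/
def IsTranscript (P : HDProt X Y O d) (tr : List Bool) : Prop :=
  (∃ x, P.alice.Cons tr x) ∧ (∃ y, P.bob.Cons tr y)

end HDProt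

/-- Partially half-duplex communication complexity of a relation whose inputs carry
function parts `gA`, `gB`. -/
noncomputable def Cphd {X Y O G : Type} (R : X → Y → O → Prop)
    (gA : X → G) (gB : Y → G) : ℕ :=
  sInf {d | ∃ P : HDProt X Y O d, P.Solves R ∧ P.PartiallyHD gA gB}

/-! ### Transcript sets for multiplexor protocols (half-duplex version) -/

section MuxSetsHD

variable {m n : ℕ} {f : BFunc m} {O : Type} {d : ℕ}

/-- `X_π(g)`: the matrices `X` such that Alice's input `(g, X)` is consistent with `tr`. -/
def XpiHD (P : HDProt (AliceMux m n f) (BobMux m n f) O d) (tr : List Bool)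
    (g : BFunc n) : Set (BMat m n) :=
  {X | ∃ h : compFG f g X = true, P.alice.Cons tr ⟨(g, X), h⟩}

/-- `Y_π(g)`: the matrices `Y` such that Bob's input `(g, Y)` is consistent with `tr`. -/
def YpiHD (P : HDProt (AliceMux m n f) (BobMux m n f) O d) (tr : List Bool)
    (g : BFunc n) : Set (BMat m n) :=
  {Y | ∃ h : compFG f g Y = false, P.bob.Cons tr ⟨(g, Y), h⟩}

/-- `A_π(g)`: the strings `a ∈ f⁻¹(1)` with `X_π(g, a) ≠ ∅`. -/
def ApiHD (P : HDProt (AliceMux m n f) (BobMux m n f) O d) (tr : List Bool)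
    (g : BFunc n) : Set (Fin m → Bool) :=
  {a | f a = true ∧ (XpiHD P tr g ∩ ginv g a).Nonempty}

/-- `B_π(g)`: the strings `b ∈ f⁻¹(0)` with `Y_π(g, b) ≠ ∅`. -/
def BpiHD (P : HDProt (AliceMux m n f) (BobMux m n f) O d) (tr : List Bool)
    (g : BFunc n) : Set (Fin m → Bool) :=
  {b | f b = false ∧ (YpiHD P tr g ∩ ginv g b).Nonempty}

/-- `V_π` (version via nonempty `X_π(g)` and `Y_π(g)`). -/
def VpiHD (P : HDProt (AliceMux m n f) (BobMux m n f) O d) (tr : List Bool) :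
    Set (BFunc n) :=
  {g | (XpiHD P tr g).Nonempty ∧ (YpiHD P tr g).Nonempty}

/-- `V_π` (version via nonempty `A_π(g)` and `B_π(g)`). -/
def VpiABHD (P : HDProt (AliceMux m n f) (BobMux m n f) O d) (tr : List Bool) :
    Set (BFunc n) :=
  {g | (ApiHD P tr g).Nonempty ∧ (BpiHD P tr g).Nonempty}

/-- A transcript `tr` of `P` is `γ`-alive (with the universal constant `κ = 8`). -/
def AliveHD (γ : ℝ) (P : HDProt (AliceMux m n f) (BobMux m n f) O d)
    (tr : List Bool) : Prop :=
  P.IsTranscript tr ∧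
  ∃ V : Set (BFunc n), V ⊆ VpiABHD P tr ∧ (∀ g ∈ V, IsBalanced g) ∧
    ((2 : ℝ) ^ (-(m : ℝ)) * ((BalancedFuncs n).ncard : ℝ) ≤ (V.ncard : ℝ)) ∧
    (∀ g ∈ V,
      (1 - γ) * m + 8 * Real.logb 2 m + 8 ≤
        Real.logb 2 (Lrect (ApiHD P tr g) (BpiHD P tr g))) ∧
    (∀ g ∈ V, ∀ a ∈ ApiHD P tr g,
      (2 : ℝ) ^ (-γ * m + 1) * ((ginv g a).ncard : ℝ) ≤
        ((XpiHD P tr g ∩ ginv g a).ncard : ℝ)) ∧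
    (∀ g ∈ V, ∀ b ∈ BpiHD P tr g,
      (2 : ℝ) ^ (-γ * m + 1) * ((ginv g b).ncard : ℝ) ≤
        ((YpiHD P tr g ∩ ginv g b).ncard : ℝ))

/-- The weak intersection property for two functions `gA`, `gB`. -/
def WeakIntersectHD (P : HDProt (AliceMux m n f) (BobMux m n f) O d) (tr : List Bool)
    (gA gB : BFunc n) : Prop :=
  ∃ X ∈ XpiHD P tr gA, ∃ Y ∈ YpiHD P tr gB,
    ∀ i : Fin m, gA (X i) ≠ gB (Y i) → X i = Y i

/-- The characteristic graph of `tr` for `KW_f ⋄ MUX_n`, on vertex set `V`. -/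
def charGraphDiamHD (P : HDProt (AliceMux m n f) (BobMux m n f) O d) (tr : List Bool)
    (V : Set (BFunc n)) : SimpleGraph ↥V where
  Adj gA gB := gA ≠ gB ∧
    ((XpiHD P tr ↑gA ∩ YpiHD P tr ↑gB).Nonempty ∨
      (XpiHD P tr ↑gB ∩ YpiHD P tr ↑gA).Nonempty)
  symm := by
    constructor
    rintro a b ⟨hne, h⟩
    exact ⟨hne.symm, h.symm⟩
  loopless := by
    constructor
    rintro a ⟨hne, -⟩
    exact hne rfl

/-- The characteristic graph of `tr` for `KW_f ⊛ MUX_n`, on vertex set `V`. -/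
def charGraphStrongHD (P : HDProt (AliceMux m n f) (BobMux m n f) O d) (tr : List Bool)
    (V : Set (BFunc n)) : SimpleGraph ↥V where
  Adj gA gB := gA ≠ gB ∧
    (WeakIntersectHD P tr ↑gA ↑gB ∨ WeakIntersectHD P tr ↑gB ↑gA)
  symm := by
    constructor
    rintro a b ⟨hne, h⟩
    exact ⟨hne.symm, h.symm⟩
  loopless := by
    constructor
    rintro a ⟨hne, -⟩
    exact hne rfl

end MuxSetsHD

/-! ### Transcript sets for multiplexor protocols (standard deterministic version) -/

section MuxSetsP

variable {m n : ℕ} {f : BFunc m} {O : Type}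

/-- `X_π(g)` for a standard deterministic protocol. -/
def XpiP (p : Prot (AliceMux m n f) (BobMux m n f) O) (tr : List Bool)
    (g : BFunc n) : Set (BMat m n) :=
  {X | ∃ h : compFG f g X = true, Prot.ConsA p tr ⟨(g, X), h⟩}

/-- `Y_π(g)` for a standard deterministic protocol. -/
def YpiP (p : Prot (AliceMux m n f) (BobMux m n f) O) (tr : List Bool)
    (g : BFunc n) : Set (BMat m n) :=
  {Y | ∃ h : compFG f g Y = false, Prot.ConsB p tr ⟨(g, Y), h⟩}

/-- `A_π(g)` for a standard deterministic protocol. -/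
def ApiP (p : Prot (AliceMux m n f) (BobMux m n f) O) (tr : List Bool)
    (g : BFunc n) : Set (Fin m → Bool) :=
  {a | f a = true ∧ (XpiP p tr g ∩ ginv g a).Nonempty}

/-- `B_π(g)` for a standard deterministic protocol. -/
def BpiP (p : Prot (AliceMux m n f) (BobMux m n f) O) (tr : List Bool)
    (g : BFunc n) : Set (Fin m → Bool) :=
  {b | f b = false ∧ (YpiP p tr g ∩ ginv g b).Nonempty}

/-- `V_π` (version via nonempty `X_π(g)` and `Y_π(g)`), standard protocols. -/
def VpiPset (p : Prot (AliceMux m n f) (BobMux m n f) O) (tr : List Bool) :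
    Set (BFunc n) :=
  {g | (XpiP p tr g).Nonempty ∧ (YpiP p tr g).Nonempty}

/-- `V_π` (version via nonempty `A_π(g)` and `B_π(g)`), standard protocols. -/
def VpiABP (p : Prot (AliceMux m n f) (BobMux m n f) O) (tr : List Bool) :
    Set (BFunc n) :=
  {g | (ApiP p tr g).Nonempty ∧ (BpiP p tr g).Nonempty}

/-- `γ`-alive transcripts (with `κ = 8`), standard protocols. -/
def AliveP (γ : ℝ) (p : Prot (AliceMux m n f) (BobMux m n f) O)
    (tr : List Bool) : Prop :=
  p.IsTranscript tr ∧
  ∃ V : Set (BFunc n), V ⊆ VpiABP p tr ∧ (∀ g ∈ V, IsBalanced g) ∧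
    ((2 : ℝ) ^ (-(m : ℝ)) * ((BalancedFuncs n).ncard : ℝ) ≤ (V.ncard : ℝ)) ∧
    (∀ g ∈ V,
      (1 - γ) * m + 8 * Real.logb 2 m + 8 ≤
        Real.logb 2 (Lrect (ApiP p tr g) (BpiP p tr g))) ∧
    (∀ g ∈ V, ∀ a ∈ ApiP p tr g,
      (2 : ℝ) ^ (-γ * m + 1) * ((ginv g a).ncard : ℝ) ≤
        ((XpiP p tr g ∩ ginv g a).ncard : ℝ)) ∧
    (∀ g ∈ V, ∀ b ∈ BpiP p tr g,
      (2 : ℝ) ^ (-γ * m + 1) * ((ginv g b).ncard : ℝ) ≤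
        ((YpiP p tr g ∩ ginv g b).ncard : ℝ))

/-- The weak intersection property, standard protocols. -/
def WeakIntersectP (p : Prot (AliceMux m n f) (BobMux m n f) O) (tr : List Bool)
    (gA gB : BFunc n) : Prop :=
  ∃ X ∈ XpiP p tr gA, ∃ Y ∈ YpiP p tr gB,
    ∀ i : Fin m, gA (X i) ≠ gB (Y i) → X i = Y i

/-- The characteristic graph for `KW_f ⋄ MUX_n`, standard protocols. -/
def charGraphDiamP (p : Prot (AliceMux m n f) (BobMux m n f) O) (tr : List Bool)
    (V : Set (BFunc n)) : SimpleGraph ↥V where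
  Adj gA gB := gA ≠ gB ∧
    ((XpiP p tr ↑gA ∩ YpiP p tr ↑gB).Nonempty ∨
      (XpiP p tr ↑gB ∩ YpiP p tr ↑gA).Nonempty)
  symm := by
    constructor
    rintro a b ⟨hne, h⟩
    exact ⟨hne.symm, h.symm⟩
  loopless := by
    constructor
    rintro a ⟨hne, -⟩
    exact hne rfl

/-- The characteristic graph for `KW_f ⊛ MUX_n`, standard protocols. -/
def charGraphStrongP (p : Prot (AliceMux m n f) (BobMux m n f) O) (tr : List Bool)
    (V : Set (BFunc n)) : SimpleGraph ↥V where
  Adj gA gB := gA ≠ gB ∧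
    (WeakIntersectP p tr ↑gA ↑gB ∨ WeakIntersectP p tr ↑gB ↑gA)
  symm := by
    constructor
    rintro a b ⟨hne, h⟩
    exact ⟨hne.symm, h.symm⟩
  loopless := by
    constructor
    rintro a ⟨hne, -⟩
    exact hne rfl

end MuxSetsP

/-! ### Prefix-thick sets, branching structures and winning sets -/

/-- A set of strings indexed by a linearly ordered set `I` is prefix thick with
degree `t`: it has a nonempty subset whose prefix tree has minimum degree
greater than `t` (the children of the depth-`i` vertex given by the prefix of
`x ∈ S'` are the possible values of the next coordinate among elements of `S'`
agreeing with `x` on all earlier coordinates). -/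
def RowThick {I A : Type} [LT I] (S : Set (I → A)) (t : ℝ) : Prop :=
  ∃ S' : Set (I → A), S' ⊆ S ∧ S'.Nonempty ∧ ∀ x ∈ S', ∀ i : I,
    t < (({a : A | ∃ y ∈ S', (∀ j, j < i → y j = x j) ∧ y i = a}).ncard : ℝ)

/-- Prefix thickness for strings over (possibly different) alphabets `A i`,
with a separate degree bound `t i` at each depth. -/
def DepThick {m : ℕ} {A : Fin m → Type} (S : Set (∀ i, A i)) (t : Fin m → ℝ) : Prop :=
  ∃ S' : Set (∀ i, A i), S' ⊆ S ∧ S'.Nonempty ∧ ∀ x ∈ S', ∀ i : Fin m,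
    t i < (({a : A i | ∃ y ∈ S', (∀ j, j < i → y j = x j) ∧ y i = a}).ncard : ℝ)

/-- The restriction of a set of matrices to the rows in `I` (ordered as in `[m]`). -/
def restrictRows {m n : ℕ} (I : Finset (Fin m)) (S : Set (BMat m n)) :
    Set (↥I → (Fin n → Bool)) :=
  (fun X => fun i : ↥I => X i.1) '' S

/-- The restriction of a set of strings to the coordinates in `I` (ordered as in `[m]`). -/
def restrictStr {m : ℕ} {A : Type} (I : Finset (Fin m)) (S : Set (Fin m → A)) :
    Set (↥I → A) :=
  (fun x => fun i : ↥I => x i.1) '' S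

/-- `w` is a branching structure of `S`: some nonempty subset `S' ⊆ S` has a prefix
tree in which every vertex at depth `i` has exactly `w i` children. -/
def IsBranching {m : ℕ} {A : Type} (S : Set (Fin m → A)) (w : Fin m → ℕ) : Prop :=
  ∃ S' : Set (Fin m → A), S' ⊆ S ∧ S'.Nonempty ∧ ∀ x ∈ S', ∀ i : Fin m,
    ({a : A | ∃ y ∈ S', (∀ j, j < i → y j = x j) ∧ y i = a}).ncard = w i

/-- The winning set of `S`: the set of its branching structures. -/
def WinSet {m : ℕ} {A : Type} (S : Set (Fin m → A)) : Set (Fin m → ℕ) :=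
  {w | IsBranching S w}

/-! ### Non-deterministic communication complexity -/

/-- There is a non-deterministic protocol for the total function `f` with
witness set of size `k`. -/
def NDProtFor {X Y : Type} (f : X × Y → Bool) (k : ℕ) : Prop :=
  ∃ a : X → Fin k → Bool, ∃ b : Y → Fin k → Bool,
    ∀ x y, f (x, y) = true ↔ ∃ w, a x w = true ∧ b y w = true

/-- The minimal size of a (nonempty) witness set of a non-deterministic protocol for `f`;
the non-deterministic communication complexity `NCC(f)` is its base-2 logarithm. -/
noncomputable def NCCcard {X Y : Type} (f : X × Y → Bool) : ℕ :=
  sInf {k | 1 ≤ k ∧ NDProtFor f k}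

/-- A non-deterministic protocol for the partial problem `GraphIneq_G` with witness
set of size `k`: adjacent pairs are accepted, equal pairs are rejected. -/
def GraphIneqProt {V : Type} (G : SimpleGraph V) (k : ℕ) : Prop :=
  ∃ a : V → Fin k → Bool, ∃ b : V → Fin k → Bool,
    (∀ u v, G.Adj u v → ∃ w, a u w = true ∧ b v w = true) ∧
    (∀ v, ¬ ∃ w, a v w = true ∧ b v w = true)

/-- The minimal witness-set size of a non-deterministic protocol for `GraphIneq_G`;
`NCC(GraphIneq_G)` is its base-2 logarithm. -/
noncomputable def NCCgraphIneqCard {V : Type} (G : SimpleGraph V) : ℕ :=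
  sInf {k | 1 ≤ k ∧ GraphIneqProt G k}

/-- `S` is an independent set of `G`. -/
def IndepIn {V : Type} (G : SimpleGraph V) (S : Set V) : Prop :=
  ∀ u ∈ S, ∀ v ∈ S, ¬ G.Adj u v

/-!
Alice's half `a` of a protocol with `k` witnesses is a proper colouring by `k`-bit strings:
if `a u = a v` for adjacent `u, v`, a witness accepting `(u, v)` would also accept `(v, v)`.
Hence `χ ≤ 2 ^ k`. Conversely, colour `G` with `χ` colours and label the colours by distinct
`⌊k/2⌋`-subsets of `Fin k`; Alice accepts the witnesses in her set and Bob those outside his.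
Distinct sets of equal size are never nested, so adjacent pairs are accepted and equal pairs
rejected. Since `binom(k, ⌊k/2⌋) ≥ 2 ^ k / (k + 1)`, `k = ⌊log₂ χ²⌋` is large enough.
-/

open Finset

lemma add_eight_sq_le_two_pow (k : ℕ) : (k + 8) ^ 2 ≤ 2 ^ (k + 6) := by
  induction k with
  | zero => norm_num
  | succ k ih =>
    calc (k + 1 + 8) ^ 2 ≤ 2 * (k + 8) ^ 2 := by nlinarith [Nat.zero_le k]
      _ ≤ 2 * 2 ^ (k + 6) := by omega
      _ = 2 ^ (k + 1 + 6) := by ring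

lemma two_pow_le_succ_mul_choose_middle (k : ℕ) : 2 ^ k ≤ (k + 1) * k.choose (k / 2) :=
  calc 2 ^ k = ∑ i ∈ range (k + 1), k.choose i := (Nat.sum_range_choose k).symm
    _ ≤ (range (k + 1)).card • k.choose (k / 2) :=
        sum_le_card_nsmul _ _ _ fun i _ => Nat.choose_le_middle i k
    _ = (k + 1) * k.choose (k / 2) := by simp

lemma two_pow_succ_le_sq_choose_middle_add_one {k : ℕ} (hk : 2 ≤ k) :
    2 ^ (k + 1) ≤ (k.choose (k / 2) + 1) ^ 2 := by
  rcases Nat.lt_or_ge k 7 with hsmall | hlarge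
  · interval_cases k <;> decide
  obtain ⟨j, rfl⟩ := Nat.exists_eq_add_of_le' hlarge
  set B := (j + 7).choose ((j + 7) / 2)
  -- `2 ^ k ≤ (k + 1) B` and `(k + 1) ^ 2 ≤ 2 ^ (k - 1)` give `B ^ 2 ≥ 2 ^ (2k) / (k + 1) ^ 2 ≥ 2 ^ (k + 1)`.
  have hB := two_pow_le_succ_mul_choose_middle (j + 7)
  have key : (j + 8) ^ 2 * 2 ^ (j + 8) ≤ (j + 8) ^ 2 * B ^ 2 :=
    calc (j + 8) ^ 2 * 2 ^ (j + 8) ≤ 2 ^ (j + 6) * 2 ^ (j + 8) :=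
          Nat.mul_le_mul_right _ (add_eight_sq_le_two_pow j)
      _ = 2 ^ (j + 7) * 2 ^ (j + 7) := by ring
      _ ≤ ((j + 8) * B) * ((j + 8) * B) := Nat.mul_le_mul hB hB
      _ = (j + 8) ^ 2 * B ^ 2 := by ring
  calc 2 ^ (j + 7 + 1) ≤ B ^ 2 := Nat.le_of_mul_le_mul_left key (by positivity)
    _ ≤ (B + 1) ^ 2 := Nat.pow_le_pow_left (Nat.le_succ B) 2

lemma exists_le_choose_middle {c : ℕ} (hc : 2 ≤ c) :
    ∃ k, 1 ≤ k ∧ 2 ^ k ≤ c ^ 2 ∧ c ≤ k.choose (k / 2) := by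
  have hc2 : c ^ 2 ≠ 0 := by positivity
  refine ⟨Nat.log 2 (c ^ 2), ?_, Nat.pow_log_le_self 2 hc2, ?_⟩
  · rw [Nat.le_log_iff_pow_le one_lt_two hc2]
    nlinarith
  · have hlog : 2 ≤ Nat.log 2 (c ^ 2) := by
      rw [Nat.le_log_iff_pow_le one_lt_two hc2]
      nlinarith
    by_contra! hlt
    have := Nat.lt_pow_succ_log_self one_lt_two (c ^ 2)
    have := two_pow_succ_le_sq_choose_middle_add_one hlog
    have : (Nat.choose _ _ + 1) ^ 2 ≤ c ^ 2 := Nat.pow_le_pow_left hlt 2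
    omega

lemma Real.logb_logb_le_logb_of_le_two_pow {x : ℝ} {n : ℕ} (hx : 1 < x) (h : x ≤ 2 ^ n) :
    logb 2 (logb 2 x) ≤ logb 2 n := by
  have hlog : logb 2 x ≤ n := by
    rwa [logb_le_iff_le_rpow one_lt_two (by linarith), rpow_natCast]
  exact logb_le_logb_of_le one_lt_two (logb_pos one_lt_two hx) hlog

lemma Real.logb_le_logb_logb_add_one {x : ℝ} {n : ℕ} (hx : 1 < x) (hn : 0 < n)
    (h : 2 ^ n ≤ x ^ 2) : logb 2 n ≤ logb 2 (logb 2 x) + 1 := by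
  have hlog : (n : ℝ) ≤ 2 * logb 2 x := by
    have := logb_le_logb_of_le (b := 2) one_lt_two (by positivity) h
    rwa [logb_pow, logb_pow, logb_self_eq_one one_lt_two, mul_one, Nat.cast_ofNat] at this
  calc logb 2 n ≤ logb 2 (2 * logb 2 x) :=
        logb_le_logb_of_le one_lt_two (by exact_mod_cast hn) hlog
    _ = logb 2 (logb 2 x) + 1 := by
        rw [logb_mul two_ne_zero (logb_pos one_lt_two hx).ne', logb_self_eq_one one_lt_two,
          add_comm]

namespace SimpleGraph

variable {V : Type} {G : SimpleGraph V} {k : ℕ}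

lemma two_le_chromaticNumber_toNat_of_adj [Finite V] {u v : V} (huv : G.Adj u v) :
    2 ≤ G.chromaticNumber.toNat := by
  simpa using ENat.toNat_le_toNat (G.two_le_chromaticNumber_of_adj huv)
    (chromaticNumber_ne_top_iff_exists.2 ⟨_, G.colorable_chromaticNumber_of_fintype⟩)

lemma GraphIneqProt.chromaticNumber_toNat_le (h : GraphIneqProt G k) :
    G.chromaticNumber.toNat ≤ 2 ^ k := by
  obtain ⟨a, b, hadj, hdiag⟩ := h
  let C : G.Coloring (Fin k → Bool) := Coloring.mk a fun {u v} huv hav => by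
    obtain ⟨w, hu, hv⟩ := hadj u v huv
    exact hdiag v ⟨w, hav ▸ hu, hv⟩
  exact ENat.toNat_le_of_le_natCast (by simpa using C.colorable.chromaticNumber_le)

lemma graphIneqProt_of_coloring {α : Type} (C : G.Coloring α) (f : α → Finset (Fin k))
    (hf : ∀ i j, i ≠ j → ¬ f i ⊆ f j) : GraphIneqProt G k := by
  refine ⟨fun v w => decide (w ∈ f (C v)), fun v w => decide (w ∉ f (C v)), ?_, ?_⟩
  · intro u v huv
    obtain ⟨w, hwu, hwv⟩ := not_subset.mp (hf _ _ (C.valid huv))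
    exact ⟨w, by simpa using hwu, by simpa using hwv⟩
  · rintro v ⟨w, hwa, hwb⟩
    simp_all

lemma graphIneqProt_of_colorable (h : G.Colorable (k.choose (k / 2))) : GraphIneqProt G k :=
  graphIneqProt_of_coloring (α := {s : Finset (Fin k) // s.card = k / 2})
    (h.toColoring (by simp [Fintype.card_finset_len])) Subtype.val
    fun s t hst hsub => hst (Subtype.ext (eq_of_subset_of_card_le hsub (by rw [s.2, t.2])))

lemma NCCgraphIneqCard_le (hk : 1 ≤ k) (h : GraphIneqProt G k) : NCCgraphIneqCard G ≤ k :=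
  Nat.sInf_le ⟨hk, h⟩

lemma one_le_NCCgraphIneqCard_and_graphIneqProt (hk : 1 ≤ k) (h : GraphIneqProt G k) :
    1 ≤ NCCgraphIneqCard G ∧ GraphIneqProt G (NCCgraphIneqCard G) :=
  Nat.sInf_mem (s := {k | 1 ≤ k ∧ GraphIneqProt G k}) ⟨k, hk, h⟩

end SimpleGraph

open SimpleGraph in
theorem statement7 {V : Type} [Fintype V] (G : SimpleGraph V) (hE : ∃ u v, G.Adj u v) :
    Real.logb 2 (Real.logb 2 ((G.chromaticNumber.toNat : ℝ))) ≤
        Real.logb 2 (NCCgraphIneqCard G) ∧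
      Real.logb 2 (NCCgraphIneqCard G) ≤
        Real.logb 2 (Real.logb 2 ((G.chromaticNumber.toNat : ℝ))) + 1 := by
  obtain ⟨u, v, huv⟩ := hE
  set c := G.chromaticNumber.toNat
  have hc : 2 ≤ c := two_le_chromaticNumber_toNat_of_adj huv
  obtain ⟨k, hk, hkc, hck⟩ := exists_le_choose_middle hc
  have hprot : GraphIneqProt G k :=
    graphIneqProt_of_colorable (G.colorable_chromaticNumber_of_fintype.mono hck)
  obtain ⟨hN, hNprot⟩ := one_le_NCCgraphIneqCard_and_graphIneqProt hk hprot
  have hNk := NCCgraphIneqCard_le hk hprot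
  have hcN : c ≤ 2 ^ NCCgraphIneqCard G := hNprot.chromaticNumber_toNat_le
  have hNc : 2 ^ NCCgraphIneqCard G ≤ c ^ 2 := (Nat.pow_le_pow_right two_pos hNk).trans hkc
  have hcR : (1 : ℝ) < c := by exact_mod_cast hc
  exact ⟨Real.logb_logb_le_logb_of_le_two_pow hcR (by exact_mod_cast hcN),
    Real.logb_le_logb_logb_add_one hcR hN (by exact_mod_cast hNc)⟩
end

section
/- For all finite sets X, Y and every function f:X×Y→{0,1} that attains both values 0 and 1, it holds that NCC(f) ≤ 2^{coNCC(f)}. -/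
/-! If `1 - f` is covered by `k` rectangles `Aᵢ × Bᵢ`, then `f(x, y) = 1` exactly when no `i`
has `x ∈ Aᵢ` and `y ∈ Bᵢ`. So `f` has a non-deterministic protocol whose witness is the set
`{i | x ∈ Aᵢ}`: Alice checks that it is her set, Bob that `y ∉ Bᵢ` for every `i` in
it. This uses `2^k` witnesses, so for an optimal cover `NCC(f) ≤ k = 2^coNCC(f)`. -/

namespace NDProtFor

variable {X Y : Type} {f : X × Y → Bool}

theorem of_fintype_witness {W : Type} [Fintype W] (a : X → W → Bool) (b : Y → W → Bool)
    (h : ∀ x y, f (x, y) = true ↔ ∃ w, a x w = true ∧ b y w = true) :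
    NDProtFor f (Fintype.card W) := by
  let e := Fintype.equivFin W
  exact ⟨fun x i => a x (e.symm i), fun y i => b y (e.symm i),
    fun x y => (h x y).trans e.exists_congr_left⟩

theorem mono {k l : ℕ} (hkl : k ≤ l) (h : NDProtFor f k) : NDProtFor f l := by
  obtain ⟨a, b, hab⟩ := h
  refine ⟨fun x i => if hi : i.1 < k then a x ⟨i, hi⟩ else false,
    fun y i => if hi : i.1 < k then b y ⟨i, hi⟩ else false, fun x y => ?_⟩
  rw [hab x y]
  constructor
  · rintro ⟨w, hw⟩
    exact ⟨Fin.castLE hkl w, by simpa using hw⟩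
  · rintro ⟨i, hai, hbi⟩
    by_cases hi : i.1 < k
    · simp only [hi, dite_true] at hai hbi
      exact ⟨⟨i, hi⟩, hai, hbi⟩
    · simp [hi] at hai

theorem card_left [Fintype X] (f : X × Y → Bool) : NDProtFor f (Fintype.card X) := by
  classical
  exact of_fintype_witness (fun x w => decide (w = x)) (fun y w => f (w, y)) (by simp)

theorem of_not {k : ℕ} (h : NDProtFor (fun p => !f p) k) : NDProtFor f (2 ^ k) := by
  obtain ⟨a, b, hab⟩ := h
  have hcard : Fintype.card (Fin k → Bool) = 2 ^ k := by simp
  rw [← hcard]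
  refine of_fintype_witness (fun x s => decide (s = a x))
    (fun y s => decide (∀ i, s i = true → b y i = false)) fun x y => ?_
  have hnot : f (x, y) = false ↔ ∃ i, a x i = true ∧ b y i = true := by simpa using hab x y
  rw [← Bool.not_eq_false, hnot]
  simp

end NDProtFor

section NCCcard

variable {X Y : Type}

theorem NCCcard_le {f : X × Y → Bool} {k : ℕ} (hk : 1 ≤ k) (h : NDProtFor f k) :
    NCCcard f ≤ k :=
  Nat.sInf_le ⟨hk, h⟩

theorem NCCcard_spec [Fintype X] (f : X × Y → Bool) : 1 ≤ NCCcard f ∧ NDProtFor f (NCCcard f) :=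
  Nat.sInf_mem (s := {k | 1 ≤ k ∧ NDProtFor f k})
    ⟨_, Nat.le_add_left 1 _, (NDProtFor.card_left f).mono (Nat.le_succ _)⟩

theorem NCCcard_le_two_pow_NCCcard_not [Fintype X] (f : X × Y → Bool) :
    NCCcard f ≤ 2 ^ NCCcard (fun p => !f p) :=
  NCCcard_le Nat.one_le_two_pow (NCCcard_spec _).2.of_not

end NCCcard

theorem statement8_general {X Y : Type} [Fintype X] (f : X × Y → Bool) :
    Real.logb 2 (NCCcard f) ≤ (2 : ℝ) ^ Real.logb 2 (NCCcard fun p => !f p) := by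
  have hpos : (0 : ℝ) < NCCcard fun p => !f p := by exact_mod_cast (NCCcard_spec _).1
  have hpos' : (0 : ℝ) < NCCcard f := by exact_mod_cast (NCCcard_spec f).1
  rw [Real.rpow_logb two_pos (by norm_num) hpos, Real.logb_le_iff_le_rpow one_lt_two hpos',
    Real.rpow_natCast]
  exact_mod_cast NCCcard_le_two_pow_NCCcard_not f

theorem statement8 {X Y : Type} [Fintype X] [Fintype Y] (f : X × Y → Bool)
    (h1 : ∃ p, f p = true) (h0 : ∃ p, f p = false) :
    Real.logb 2 (NCCcard f) ≤ (2 : ℝ) ^ Real.logb 2 (NCCcard fun p => !f p) :=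
  statement8_general f
end

section
/- Let Σ be a finite alphabet of size q, let m∈ℕ, and let X,Y ⊆ Σ^m both be prefix thick with degree q/2. Then X∩Y ≠ ∅. -/
/-! Walk down the prefix trees of the thick subsets of `X` and `Y` simultaneously. At each depth
the two current vertices have more than `q/2` children each, so some letter labels a child of
both; descending along it in both trees builds a common string one letter at a time. -/

section PrefixTree

variable {I A : Type}

def prefixChildren [LT I] (S : Set (I → A)) (x : I → A) (i : I) : Set A :=
  {a | ∃ y ∈ S, (∀ j, j < i → y j = x j) ∧ y i = a}

theorem exists_agree_le_of_agree_lt [PartialOrder I] [Finite A] {S T : Set (I → A)}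
    {x y : I → A} {i : I} (hxy : ∀ j < i, x j = y j)
    (hcard : Nat.card A < (prefixChildren S x i).ncard + (prefixChildren T y i).ncard) :
    ∃ x' ∈ S, ∃ y' ∈ T, ∀ j ≤ i, x' j = y' j := by
  obtain ⟨a, ⟨x', hx', hx'x, hx'a⟩, ⟨y', hy', hy'y, hy'a⟩⟩ :=
    Set.nonempty_inter_of_lt_ncard_add_ncard hcard
  refine ⟨x', hx', y', hy', fun j hj => ?_⟩
  rcases hj.lt_or_eq with hj | rfl
  · rw [hx'x j hj, hy'y j hj, hxy j hj]
  · rw [hx'a, hy'a]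

theorem nonempty_inter_of_card_lt_ncard_prefixChildren_add {m : ℕ} [Finite A]
    {S T : Set (Fin m → A)} (hS : S.Nonempty) (hT : T.Nonempty)
    (hcard : ∀ x ∈ S, ∀ y ∈ T, ∀ i,
      Nat.card A < (prefixChildren S x i).ncard + (prefixChildren T y i).ncard) :
    (S ∩ T).Nonempty := by
  have agree_below : ∀ k ≤ m, ∃ x ∈ S, ∃ y ∈ T, ∀ j : Fin m, (j : ℕ) < k → x j = y j := by
    intro k
    induction k with
    | zero =>
      obtain ⟨x, hx⟩ := hS
      obtain ⟨y, hy⟩ := hT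
      exact fun _ => ⟨x, hx, y, hy, fun j hj => absurd hj (Nat.not_lt_zero _)⟩
    | succ k ih =>
      intro hk
      obtain ⟨x, hx, y, hy, hxy⟩ := ih (k.le_succ.trans hk)
      obtain ⟨x', hx', y', hy', hx'y'⟩ := exists_agree_le_of_agree_lt (i := ⟨k, hk⟩)
        hxy (hcard x hx y hy _)
      exact ⟨x', hx', y', hy', fun j hj => hx'y' j (Nat.lt_succ_iff.mp hj)⟩
  obtain ⟨x, hx, y, hy, hxy⟩ := agree_below m le_rfl
  obtain rfl : x = y := funext fun j => hxy j j.isLt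
  exact ⟨x, hx, hy⟩

theorem RowThick.inter_nonempty {m : ℕ} [Finite A] {X Y : Set (Fin m → A)}
    {s t : ℝ} (hX : RowThick X s) (hY : RowThick Y t) (hst : (Nat.card A : ℝ) ≤ s + t) :
    (X ∩ Y).Nonempty := by
  obtain ⟨X', hX'X, hX'ne, hX'deg⟩ := hX
  obtain ⟨Y', hY'Y, hY'ne, hY'deg⟩ := hY
  refine (nonempty_inter_of_card_lt_ncard_prefixChildren_add hX'ne hY'ne
    fun x hx y hy i => ?_).mono (Set.inter_subset_inter hX'X hY'Y)
  have hXi : s < ((prefixChildren X' x i).ncard : ℝ) := hX'deg x hx i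
  have hYi : t < ((prefixChildren Y' y i).ncard : ℝ) := hY'deg y hy i
  have hlt : (Nat.card A : ℝ) <
      (prefixChildren X' x i).ncard + (prefixChildren Y' y i).ncard := by linarith
  exact_mod_cast hlt

end PrefixTree

theorem statement9 {m : ℕ} {A : Type} [Fintype A] (X Y : Set (Fin m → A))
    (hX : RowThick X ((Fintype.card A : ℝ) / 2))
    (hY : RowThick Y ((Fintype.card A : ℝ) / 2)) :
    (X ∩ Y).Nonempty :=
  hX.inter_nonempty hY (by rw [Nat.card_eq_fintype_card, add_halves])
end

section
/- Let Σ be a finite alphabet of size q, let m∈ℕ and X ⊆ Σ^{m+1}. For σ∈Σ let X_σ = {x∈Σ^m : σ∘x ∈ X} (the strings obtained from strings of X beginning with σ by deleting the first symbol), and for w∈{1,…,q}^m let c_w be the number of symbols σ∈Σ with w∈W(X_σ). Then for every k∈{1,…,q} and every w∈{1,…,q}^m: the vector k∘w (k prepended to w) belongs to W(X) if and only if k ≤ c_w. -/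
/-! The first level of a prefix tree with branching structure `k ∘ w` consists of `k` symbols, and
below each of them hangs a prefix tree of the corresponding fiber with branching structure `w`.
Conversely, gluing such trees for any `k` winning symbols gives a tree with branching `k ∘ w`. -/

namespace PrefixTree

variable {A : Type} {m : ℕ}

def children (S : Set (Fin m → A)) (x : Fin m → A) (i : Fin m) : Set A :=
  {a | ∃ y ∈ S, (∀ j, j < i → y j = x j) ∧ y i = a}

def fiber (S : Set (Fin (m + 1) → A)) (σ : A) : Set (Fin m → A) :=
  {x | Fin.cons σ x ∈ S}

theorem isBranching_iff (S : Set (Fin m → A)) (w : Fin m → ℕ) :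
    IsBranching S w ↔
      ∃ S' ⊆ S, S'.Nonempty ∧ ∀ x ∈ S', ∀ i, (children S' x i).ncard = w i :=
  Iff.rfl

theorem mem_fiber {S : Set (Fin (m + 1) → A)} {σ : A} {x : Fin m → A} :
    x ∈ fiber S σ ↔ Fin.cons σ x ∈ S :=
  Iff.rfl

theorem fiber_mono {S T : Set (Fin (m + 1) → A)} (h : S ⊆ T) (σ : A) :
    fiber S σ ⊆ fiber T σ :=
  fun _ hx => h hx

theorem children_zero (S : Set (Fin (m + 1) → A)) (x : Fin (m + 1) → A) :
    children S x 0 = (· 0) '' S := by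
  ext a
  simp [children]

theorem children_succ (S : Set (Fin (m + 1) → A)) (x : Fin (m + 1) → A) (i : Fin m) :
    children S x i.succ = children (fiber S (x 0)) (Fin.tail x) i := by
  ext a
  constructor
  · rintro ⟨y, hyS, hagree, rfl⟩
    have hy0 : y 0 = x 0 := hagree 0 i.succ_pos
    refine ⟨Fin.tail y, ?_, fun j hj => hagree j.succ (Fin.succ_lt_succ_iff.mpr hj), rfl⟩
    rwa [mem_fiber, ← hy0, Fin.cons_self_tail]
  · rintro ⟨t, htS, hagree, rfl⟩
    refine ⟨Fin.cons (x 0) t, htS, fun j => Fin.cases (fun _ => rfl) (fun j hj => ?_) j, rfl⟩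
    exact hagree j (Fin.succ_lt_succ_iff.mp hj)

def glue (T : Set A) (F : A → Set (Fin m → A)) : Set (Fin (m + 1) → A) :=
  {z | z 0 ∈ T ∧ Fin.tail z ∈ F (z 0)}

theorem fiber_glue {T : Set A} {F : A → Set (Fin m → A)} {σ : A} (hσ : σ ∈ T) :
    fiber (glue T F) σ = F σ := by
  ext x
  simp [fiber, glue, hσ]

theorem image_zero_glue {T : Set A} {F : A → Set (Fin m → A)}
    (hF : ∀ σ ∈ T, (F σ).Nonempty) : (· 0) '' glue T F = T := by
  ext σ
  constructor
  · rintro ⟨z, hz, rfl⟩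
    exact hz.1
  · intro hσ
    obtain ⟨x, hx⟩ := hF σ hσ
    exact ⟨Fin.cons σ x, by simpa [glue] using ⟨hσ, hx⟩, rfl⟩

theorem isBranching_cons_iff {S : Set (Fin (m + 1) → A)} {k : ℕ} {w : Fin m → ℕ}
    (hk : k ≠ 0) :
    IsBranching S (Fin.cons k w) ↔
      ∃ T : Set A, T.ncard = k ∧ ∀ σ ∈ T, IsBranching (fiber S σ) w := by
  simp only [isBranching_iff]
  constructor
  · rintro ⟨S', hS'S, ⟨x₀, hx₀⟩, hbranch⟩
    refine ⟨(· 0) '' S', by simpa [children_zero] using hbranch x₀ hx₀ 0, ?_⟩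
    rintro _ ⟨y, hy, rfl⟩
    refine ⟨fiber S' (y 0), fiber_mono hS'S _, ⟨Fin.tail y, by simpa [mem_fiber]⟩, ?_⟩
    intro x hx i
    simpa [children_succ] using hbranch _ hx i.succ
  · rintro ⟨T, hTcard, hT⟩
    choose! F hFS hFne hFbranch using hT
    refine ⟨glue T F, fun z hz => ?_, ?_, fun z hz => Fin.cases ?_ fun i => ?_⟩
    · simpa [mem_fiber] using hFS _ hz.1 hz.2
    · obtain ⟨σ, hσ⟩ := Set.nonempty_of_ncard_ne_zero (hTcard ▸ hk)
      obtain ⟨x, hx⟩ := hFne σ hσ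
      exact ⟨Fin.cons σ x, by simpa [glue] using ⟨hσ, hx⟩⟩
    · simpa [children_zero, image_zero_glue hFne] using hTcard
    · simpa [children_succ, fiber_glue hz.1] using hFbranch _ hz.1 _ hz.2 i

end PrefixTree

theorem statement12_general {m : ℕ} {A : Type} [Fintype A] (X : Set (Fin (m + 1) → A))
    (w : Fin m → ℕ) (k : ℕ) (hk1 : 1 ≤ k) :
    Fin.cons k w ∈ WinSet X ↔
      k ≤ ({σ : A | w ∈ WinSet {x : Fin m → A | Fin.cons σ x ∈ X}}).ncard := by
  change IsBranching X _ ↔ k ≤ {σ : A | IsBranching (PrefixTree.fiber X σ) w}.ncard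
  rw [PrefixTree.isBranching_cons_iff (Nat.one_le_iff_ne_zero.mp hk1)]
  constructor
  · rintro ⟨T, rfl, hT⟩
    exact Set.ncard_le_ncard hT
  · intro hk
    obtain ⟨T, hT, hTcard⟩ := Set.exists_subset_card_eq hk
    exact ⟨T, hTcard, hT⟩

theorem statement12 {m : ℕ} {A : Type} [Fintype A] (X : Set (Fin (m + 1) → A))
    (w : Fin m → ℕ) (k : ℕ) (hk1 : 1 ≤ k) (hkq : k ≤ Fintype.card A) :
    Fin.cons k w ∈ WinSet X ↔
      k ≤ ({σ : A | w ∈ WinSet {x : Fin m → A | Fin.cons σ x ∈ X}}).ncard :=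
  statement12_general X w k hk1
end

section
/- Let Σ be a finite alphabet of size q, let X ⊆ Σ^m, let ε ≥ 0, and let F be the family of subsets I ⊆ [m] such that X|_I (viewed as a subset of Σ^I) is prefix thick with degree (1/2+ε)·q. Then |F|/2^m ≥ 2^{−2·log₂(e)·ε·m}·|X|/q^m. -/
/-!
Induct on `m`, splitting `X` according to the first letter into the sections
`X_a = {x | a :: x ∈ X}`. For `J ⊆ [m]` let `k(J)` be the number of letters `a` such that
`X_a|_J` is prefix thick with degree `t = (1/2 + ε) q`. If `k(J) ≥ 1` then `X|_{J+1}` is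
thick (`J+1` being the shift of `J`), and if `k(J) > t` then so is `X|_{{0} ∪ (J+1)}`, the
letters counted by `k(J)` being the children of the root. Since `(1 + 2ε) e^{-2ε} ≤ 1` and `k(J) ≤ q`, this gives
`2 e^{-2ε} k(J) ≤ q · ([J+1 ∈ F] + [{0} ∪ (J+1) ∈ F])`, and summing over `J` together with the
induction hypothesis for every `X_a` yields `(2 e^{-2ε})^m |X| ≤ |F| q^m`.
Finally `2^{-2 log₂(e) ε m} = e^{-2εm}`.
-/

open Finset Real

theorem sum_univ_finset_fin_succ {M : Type*} [AddCommMonoid M] {m : ℕ}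
    (f : Finset (Fin (m + 1)) → M) :
    ∑ I, f I = ∑ J : Finset (Fin m), f (J.map (Fin.succEmb m)) +
      ∑ J : Finset (Fin m), f (insert 0 (J.map (Fin.succEmb m))) := by
  classical
  have h := sum_powerset_insert (s := (univ : Finset (Fin m)).map (Fin.succEmb m)) (a := 0)
    (by simp) f
  rw [show insert 0 ((univ : Finset (Fin m)).map (Fin.succEmb m)) = univ by
    rw [Fin.univ_succ, cons_eq_insert]; rfl] at h
  have hinj : Set.InjOn (fun J : Finset (Fin m) => J.image (Fin.succEmb m))
      ((univ : Finset (Fin m)).powerset : Set (Finset (Fin m))) :=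
    (image_injective (Fin.succEmb m).injective).injOn
  rw [powerset_univ, map_eq_image, powerset_image, sum_image hinj, sum_image hinj,
    powerset_univ] at h
  simpa only [map_eq_image] using h

theorem ncard_setOf_eq_sum_ite {α R : Type*} [Fintype α] [AddCommMonoidWithOne R]
    (p : α → Prop) [DecidablePred p] :
    ({x | p x}.ncard : R) = ∑ x, if p x then 1 else 0 := by
  rw [Set.ncard_eq_toFinset_card', Set.toFinset_ofPred, natCast_card_filter]

theorem rowThick_of_subset_children {ι A : Type} [LT ι] [Finite A] {S S' : Set (ι → A)}
    {t : ℝ} (hS' : S' ⊆ S) (hne : S'.Nonempty)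
    (hchildren : ∀ x ∈ S', ∀ i, ∃ C : Set A, t < C.ncard ∧
      C ⊆ {a | ∃ y ∈ S', (∀ j, j < i → y j = x j) ∧ y i = a}) :
    RowThick S t := by
  refine ⟨S', hS', hne, fun x hx i => ?_⟩
  obtain ⟨C, hC, hCsub⟩ := hchildren x hx i
  exact hC.trans_le (by exact_mod_cast Set.ncard_le_ncard hCsub (Set.toFinite _))

def consSection {m : ℕ} {A : Type} (X : Set (Fin (m + 1) → A)) (a : A) : Set (Fin m → A) :=
  {x | Fin.cons a x ∈ X}

theorem ncard_eq_sum_ncard_consSection {m : ℕ} {A : Type} [Fintype A]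
    (X : Set (Fin (m + 1) → A)) :
    X.ncard = ∑ a, (consSection X a).ncard := by
  have e : ↥X ≃ Σ a, ↥(consSection X a) :=
    ((Fin.consEquiv fun _ => A).subtypeEquiv fun _ => Iff.rfl).symm.trans
      (Equiv.subtypeProdEquivSigmaSubtype fun a x => Fin.cons a x ∈ X)
  rw [← Nat.card_coe_set_eq, Nat.card_congr e, Nat.card_sigma]
  simp [Nat.card_coe_set_eq]

section ConsSection

variable {m : ℕ} {A : Type} {X : Set (Fin (m + 1) → A)} {a : A} {J : Finset (Fin m)}

theorem exists_cons_of_mem_restrictStr_consSection {s : ↥J → A}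
    (hs : s ∈ restrictStr J (consSection X a)) :
    ∃ x ∈ X, x 0 = a ∧ ∀ j : ↥J, x j.1.succ = s j := by
  obtain ⟨x, hx, rfl⟩ := hs
  exact ⟨Fin.cons a x, hx, rfl, fun _ => rfl⟩

theorem rowThick_restrictStr_map_succEmb [Finite A] {t : ℝ}
    (h : RowThick (restrictStr J (consSection X a)) t) :
    RowThick (restrictStr (J.map (Fin.succEmb m)) X) t := by
  obtain ⟨W, hWsub, hWne, hW⟩ := h
  set I := J.map (Fin.succEmb m)
  let tl : (↥I → A) → ↥J → A := fun z j => z ⟨j.1.succ, mem_map_of_mem _ j.2⟩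
  have lift : ∀ s ∈ W, ∃ y ∈ restrictStr I X ∩ tl ⁻¹' W, tl y = s := by
    intro s hs
    obtain ⟨x, hx, -, hxs⟩ := exists_cons_of_mem_restrictStr_consSection (hWsub hs)
    have htl : tl (fun i => x i) = s := funext hxs
    exact ⟨fun i => x i, ⟨⟨x, hx, rfl⟩, show tl (fun i => x i) ∈ W from htl ▸ hs⟩, htl⟩
  refine rowThick_of_subset_children (S' := restrictStr I X ∩ tl ⁻¹' W)
    Set.inter_subset_left ?_ ?_
  · obtain ⟨s, hs⟩ := hWne
    obtain ⟨y, hy, -⟩ := lift s hs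
    exact ⟨y, hy⟩
  rintro z ⟨-, hz⟩ ⟨_, hi⟩
  obtain ⟨j, hj, rfl⟩ := mem_map.mp hi
  refine ⟨_, hW _ hz ⟨j, hj⟩, ?_⟩
  rintro b ⟨y', hy', hagree, rfl⟩
  obtain ⟨y, hy, rfl⟩ := lift y' hy'
  refine ⟨y, hy, ?_, rfl⟩
  rintro ⟨_, hi'⟩ hlt
  obtain ⟨j', hj', rfl⟩ := mem_map.mp hi'
  exact hagree ⟨j', hj'⟩ (Fin.succ_lt_succ_iff.mp hlt)

theorem rowThick_restrictStr_insert_zero_map_succEmb [Finite A] {t : ℝ} (ht : 0 ≤ t)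
    (K : Finset A) (hK : t < #K)
    (hthick : ∀ a ∈ K, RowThick (restrictStr J (consSection X a)) t) :
    RowThick (restrictStr (insert 0 (J.map (Fin.succEmb m))) X) t := by
  choose! W hWsub hWne hW using hthick
  set I := insert 0 (J.map (Fin.succEmb m))
  let hd : (↥I → A) → A := fun z => z ⟨0, mem_insert_self _ _⟩
  let tl : (↥I → A) → ↥J → A := fun z j =>
    z ⟨j.1.succ, mem_insert_of_mem (mem_map_of_mem _ j.2)⟩
  set S' := restrictStr I X ∩ {z | hd z ∈ K ∧ tl z ∈ W (hd z)}
  have lift : ∀ b ∈ K, ∀ s ∈ W b, ∃ y ∈ S', hd y = b ∧ tl y = s := by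
    intro b hb s hs
    obtain ⟨x, hx, rfl, hxs⟩ := exists_cons_of_mem_restrictStr_consSection (hWsub b hb hs)
    have htl : tl (fun i => x i) = s := funext hxs
    exact ⟨fun i => x i, ⟨⟨x, hx, rfl⟩, hb, htl ▸ hs⟩, rfl, htl⟩
  have lift_root : ∀ b ∈ K, ∃ y ∈ S', hd y = b := fun b hb => by
    obtain ⟨s, hs⟩ := hWne b hb
    obtain ⟨y, hy, hyb, -⟩ := lift b hb s hs
    exact ⟨y, hy, hyb⟩
  refine rowThick_of_subset_children (S' := S') Set.inter_subset_left ?_ ?_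
  · obtain ⟨b, hb⟩ := card_pos.mp (by exact_mod_cast ht.trans_lt hK)
    obtain ⟨y, hy, -⟩ := lift_root b hb
    exact ⟨y, hy⟩
  rintro z ⟨-, hzK, hzW⟩ ⟨_, hi⟩
  rcases mem_insert.mp hi with rfl | hi
  · refine ⟨K, by simpa using hK, fun b hb => ?_⟩
    obtain ⟨y, hy, rfl⟩ := lift_root b hb
    exact ⟨y, hy, fun i' hlt => absurd hlt (Fin.not_lt_zero _), rfl⟩
  obtain ⟨j, hj, rfl⟩ := mem_map.mp hi
  refine ⟨_, hW _ hzK _ hzW ⟨j, hj⟩, ?_⟩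
  rintro b ⟨y', hy', hagree, rfl⟩
  obtain ⟨y, hy, hyz, rfl⟩ := lift _ hzK y' hy'
  refine ⟨y, hy, ?_, rfl⟩
  rintro ⟨_, hi'⟩ hlt
  rcases mem_insert.mp hi' with rfl | hi'
  · exact hyz
  obtain ⟨j', hj', rfl⟩ := mem_map.mp hi'
  exact hagree ⟨j', hj'⟩ (Fin.succ_lt_succ_iff.mp hlt)

end ConsSection

theorem two_mul_exp_neg_mul_le {ε q k : ℝ} {P Q : Prop} [Decidable P] [Decidable Q]
    (hε : 0 ≤ ε) (hk : 0 ≤ k) (hkq : k ≤ q) (hP : 0 < k → P)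
    (hQ : (1 / 2 + ε) * q < k → Q) :
    2 * exp (-(2 * ε)) * k ≤ q * ((if P then 1 else 0) + (if Q then 1 else 0)) := by
  have hr : exp (-(2 * ε)) * (1 + 2 * ε) ≤ 1 :=
    calc exp (-(2 * ε)) * (1 + 2 * ε) ≤ exp (-(2 * ε)) * exp (2 * ε) := by
          gcongr; linarith [add_one_le_exp (2 * ε)]
      _ = 1 := by rw [← exp_add, neg_add_cancel, exp_zero]
  have hr1 : exp (-(2 * ε)) ≤ 1 := exp_le_one_iff.mpr (by linarith)
  have hr0 := exp_pos (-(2 * ε))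
  rcases hk.eq_or_lt with rfl | hk0
  · split_ifs <;> linarith
  rw [if_pos (hP hk0)]
  by_cases hkt : (1 / 2 + ε) * q < k
  · rw [if_pos (hQ hkt)]
    nlinarith
  · split_ifs <;> nlinarith

def rowThickSets {m : ℕ} {A : Type} (X : Set (Fin m → A)) (t : ℝ) : Set (Finset (Fin m)) :=
  {I | RowThick (restrictStr I X) t}

theorem exp_neg_pow_mul_two_pow_mul_ncard_le {A : Type} [Fintype A] {ε : ℝ}
    (hε : 0 ≤ ε) {m : ℕ} (X : Set (Fin m → A)) :
    exp (-(2 * ε)) ^ m * 2 ^ m * X.ncard ≤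
      (rowThickSets X ((1 / 2 + ε) * Fintype.card A)).ncard * (Fintype.card A : ℝ) ^ m := by
  classical
  set q : ℝ := (Fintype.card A : ℝ)
  set t := (1 / 2 + ε) * q
  induction m with
  | zero =>
    rcases X.eq_empty_or_nonempty with rfl | hX
    · simp
    have hempty : ∅ ∈ rowThickSets X t :=
      ⟨restrictStr ∅ X, subset_rfl, hX.image _, fun _ _ i => isEmptyElim i⟩
    have hX1 : X.ncard ≤ 1 := Set.ncard_le_one_of_subsingleton X
    have hF1 : 1 ≤ (rowThickSets X t).ncard := (Set.ncard_pos).mpr ⟨_, hempty⟩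
    simp only [pow_zero, one_mul, mul_one]
    exact_mod_cast hX1.trans hF1
  | succ m ih =>
    let k : Finset (Fin m) → ℕ := fun J => #{a | J ∈ rowThickSets (consSection X a) t}
    let b : Finset (Fin (m + 1)) → ℝ := fun I => if I ∈ rowThickSets X t then 1 else 0
    have hk : ∀ J : Finset (Fin m), 2 * exp (-(2 * ε)) * k J ≤
        q * (b (J.map (Fin.succEmb m)) + b (insert 0 (J.map (Fin.succEmb m)))) := by
      intro J
      refine two_mul_exp_neg_mul_le hε (Nat.cast_nonneg _) (Nat.cast_le.mpr (card_le_univ _))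
        (fun hpos => ?_) (fun hkt => ?_)
      · obtain ⟨a, ha⟩ := card_pos.mp (Nat.cast_pos.mp hpos)
        exact rowThick_restrictStr_map_succEmb (mem_filter.mp ha).2
      · exact rowThick_restrictStr_insert_zero_map_succEmb (by positivity) _ hkt
          fun a ha => (mem_filter.mp ha).2
    have hcount : ∑ a, ((rowThickSets (consSection X a) t).ncard : ℝ) = ∑ J, (k J : ℝ) :=
      calc ∑ a, ((rowThickSets (consSection X a) t).ncard : ℝ)
          = ∑ a, ∑ J, if J ∈ rowThickSets (consSection X a) t then (1 : ℝ) else 0 :=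
            sum_congr rfl fun a _ => ncard_setOf_eq_sum_ite _
        _ = ∑ J, (k J : ℝ) := by
            rw [sum_comm]
            simp only [k, natCast_card_filter]
    have hF : ((rowThickSets X t).ncard : ℝ) = ∑ I, b I := ncard_setOf_eq_sum_ite _
    calc exp (-(2 * ε)) ^ (m + 1) * 2 ^ (m + 1) * X.ncard
        = ∑ a, 2 * exp (-(2 * ε)) * (exp (-(2 * ε)) ^ m * 2 ^ m * (consSection X a).ncard) := by
          rw [ncard_eq_sum_ncard_consSection, Nat.cast_sum, mul_sum]
          ring_nf
      _ ≤ ∑ a, 2 * exp (-(2 * ε)) * ((rowThickSets (consSection X a) t).ncard * q ^ m) :=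
          sum_le_sum fun a _ => mul_le_mul_of_nonneg_left (ih _) (by positivity)
      _ = q ^ m * ∑ J, 2 * exp (-(2 * ε)) * k J := by
          rw [← mul_sum, ← sum_mul, hcount, ← mul_sum]
          ring
      _ ≤ q ^ m * ∑ J : Finset (Fin m),
            q * (b (J.map (Fin.succEmb m)) + b (insert 0 (J.map (Fin.succEmb m)))) :=
          mul_le_mul_of_nonneg_left (sum_le_sum fun J _ => hk J) (by positivity)
      _ = (rowThickSets X t).ncard * q ^ (m + 1) := by
          rw [hF, sum_univ_finset_fin_succ, ← mul_sum, sum_add_distrib]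
          ring

theorem statement13 {m : ℕ} {A : Type} [Fintype A] (X : Set (Fin m → A))
    (ε : ℝ) (hε : 0 ≤ ε) :
    (2 : ℝ) ^ (-(2 * Real.logb 2 (Real.exp 1) * ε * m)) * (X.ncard : ℝ) /
        (Fintype.card A : ℝ) ^ m ≤
      (({I : Finset (Fin m) |
          RowThick (restrictStr I X) ((1 / 2 + ε) * (Fintype.card A : ℝ))}).ncard : ℝ) /
        2 ^ m := by
  have hbase : (2 : ℝ) ^ (-(2 * logb 2 (exp 1) * ε * m)) = exp (-(2 * ε)) ^ m := by
    rw [show -(2 * logb 2 (exp 1) * ε * m) = logb 2 (exp 1) * (m * -(2 * ε)) by ring,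
      rpow_mul zero_le_two, rpow_logb two_pos (by norm_num) (exp_pos 1), exp_one_rpow,
      exp_nat_mul]
  rw [hbase, le_div_iff₀ (by positivity), div_mul_eq_mul_div]
  refine div_le_of_le_mul₀ (by positivity) (by positivity) ?_
  have key := exp_neg_pow_mul_two_pow_mul_ncard_le hε X
  rw [rowThickSets] at key
  linarith
end
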